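/- The band generators a_{ij} of the braid group B_n satisfy a_{kl}a_{ij} = a_{ij}a_{kl} whenever (k-i)(k-j)(l-i)(l-j) > 0, where 1 ≤ j < i ≤ n and 1 ≤ l < k ≤ n. -/

import Mathlib

def braidRels (m : ℕ) : Set (FreeGroup (Fin m)) :=
  {r | ∃ i j : Fin m,
      ((i : ℕ) + 2 ≤ (j : ℕ) ∧
        r = FreeGroup.of i * FreeGroup.of j * (FreeGroup.of i)⁻¹ * (FreeGroup.of j)⁻¹) ∨
      ((i : ℕ) + 1 = (j : ℕ) ∧
        r = FreeGroup.of i * FreeGroup.of j * FreeGroup.of i *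
            (FreeGroup.of j * FreeGroup.of i * FreeGroup.of j)⁻¹)}

/-- Artin's braid group `B_n`, with generators `σ₁, …, σ_{n-1}`. -/
abbrev BraidGroup (n : ℕ) := PresentedGroup (braidRels (n - 1))

/-- The Artin generator `σ i` of `B_n` (junk value `1` if `i` is out of range). -/
def bσ (n i : ℕ) : BraidGroup n :=
  if h : i - 1 < n - 1 then PresentedGroup.of ⟨i - 1, h⟩ else 1

/-- `δ = σ_{n-1} σ_{n-2} ⋯ σ₁`. -/
def bδ (n : ℕ) : BraidGroup n := ((List.range (n-1)).map (fun k => bσ n (n-1-k))).prod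

/-- `ε = δ σ₁`. -/
def bε (n : ℕ) : BraidGroup n := bδ n * bσ n 1

/-- `Δ = σ₁ (σ₂σ₁) ⋯ (σ_{n-1} ⋯ σ₁)`. -/
def bΔ (n : ℕ) : BraidGroup n :=
  ((List.range (n-1)).map (fun m => ((List.range (m+1)).map (fun k => bσ n (m+1-k))).prod)).prod

/-- The band generator `a_{ij} = σ_{i-1} ⋯ σ_{j+1} σ_j σ_{j+1}⁻¹ ⋯ σ_{i-1}⁻¹`. -/
def band (n i j : ℕ) : BraidGroup n :=
  (((List.range (i-1-j)).map (fun k => bσ n (i-1-k))).prod) * bσ n j *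
  (((List.range (i-1-j)).map (fun k => bσ n (i-1-k))).prod)⁻¹

/-- `[i, i-1, …, j] = a_{i,i-1} a_{i-1,i-2} ⋯ a_{j+1,j}`. -/
def bchain (n i j : ℕ) : BraidGroup n :=
  ((List.range (i-j)).map (fun t => band n (i-t) (i-t-1))).prod

/-! The band generator `a_{ij}` is the conjugate of `σ_j` by `σ_{i-1} ⋯ σ_{j+1}`, so it lies in
the subgroup generated by `σ_j, …, σ_{i-1}`. When the chords `{i, j}` and `{k, l}` are disjoint and
not nested, the generators of the two subgroups are at distance at least two and commute. When
`{k, l}` is nested in `{i, j}`, it suffices that `a_{ij}` commutes with `σ_c` for `j < c < i - 1`;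
for `c = i - 2` this is because conjugation by `σ_{c+1} σ_c` sends `σ_{c+1}` to `σ_c` and `a_{cj}`
to `a_{c+2,j}`, while `σ_{c+1}` commutes with `a_{cj}`. -/

theorem bσ_commute {n a b : ℕ} (ha : 1 ≤ a) (hab : a + 2 ≤ b) : Commute (bσ n a) (bσ n b) := by
  unfold bσ
  split_ifs with ha' hb
  · have hrel := PresentedGroup.mk_eq_mk_of_mul_inv_mem (rels := braidRels (n - 1))
      (x := .of ⟨a - 1, ha'⟩ * .of ⟨b - 1, hb⟩) (y := .of ⟨b - 1, hb⟩ * .of ⟨a - 1, ha'⟩)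
      ⟨⟨a - 1, ha'⟩, ⟨b - 1, hb⟩, .inl ⟨by simp only; omega, by simp only [mul_inv_rev, mul_assoc]⟩⟩
    simp only [map_mul] at hrel
    exact hrel
  all_goals simp

theorem bσ_braid {n a : ℕ} (ha : 1 ≤ a) (han : a + 1 < n) :
    bσ n a * bσ n (a + 1) * bσ n a = bσ n (a + 1) * bσ n a * bσ n (a + 1) := by
  unfold bσ
  rw [dif_pos (by omega), dif_pos (by omega)]
  have hrel := PresentedGroup.mk_eq_mk_of_mul_inv_mem (rels := braidRels (n - 1))
    ⟨⟨a - 1, by omega⟩, ⟨a + 1 - 1, by omega⟩, .inr ⟨by simp only; omega, rfl⟩⟩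
  simp only [map_mul] at hrel
  exact hrel

theorem band_succ_self (n j : ℕ) : band n (j + 1) j = bσ n j := by
  simp [band]

theorem band_succ {n i j : ℕ} (hji : j < i) :
    band n (i + 1) j = bσ n i * band n i j * (bσ n i)⁻¹ := by
  have hterms : (fun k => bσ n (i - k.succ)) = fun k => bσ n (i - 1 - k) := by
    funext k; congr 1; omega
  unfold band
  rw [Nat.add_sub_cancel, show i - j = (i - 1 - j) + 1 by omega, List.range_succ_eq_map]
  simp only [List.map_cons, List.map_map, List.prod_cons, Function.comp_def, Nat.sub_zero, hterms,
    mul_inv_rev, mul_assoc]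

theorem commute_band_of_commute_bσ {n i j : ℕ} {g : BraidGroup n} (hji : j < i)
    (h : ∀ c, j ≤ c → c < i → Commute g (bσ n c)) : Commute g (band n i j) := by
  induction i, hji using Nat.le_induction with
  | base => simpa [band_succ_self] using h j le_rfl (by omega)
  | succ i hji ih =>
    rw [band_succ hji]
    have hσ := h i (by omega) (by omega)
    exact (hσ.mul_right (ih fun c hjc hci => h c hjc (by omega))).mul_right hσ.inv_right

theorem bσ_commute_band_of_far {n i j c : ℕ} (hj : 1 ≤ j) (hji : j < i) (hc : 1 ≤ c)
    (hfar : c + 2 ≤ j ∨ i + 1 ≤ c) : Commute (bσ n c) (band n i j) :=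
  commute_band_of_commute_bσ hji fun d hjd hdi => by
    rcases hfar with hfar | hfar
    · exact bσ_commute hc (by omega)
    · exact (bσ_commute (by omega) (by omega)).symm

theorem commute_conj_of_braid {G : Type*} [Group G] {s t x : G} (hbraid : s * t * s = t * s * t)
    (hx : Commute t x) : Commute s (t * s * x * (t * s)⁻¹) := by
  have hconj : t * s * t * (t * s)⁻¹ = s := by
    rw [mul_inv_eq_iff_eq_mul, ← hbraid, mul_assoc]
  simpa only [MulAut.conj_apply, hconj] using hx.map (MulAut.conj (t * s))

theorem bσ_commute_band_of_lt {n i j c : ℕ} (hj : 1 ≤ j) (hjc : j < c) (hci : c + 2 ≤ i)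
    (hin : i ≤ n) : Commute (bσ n c) (band n i j) := by
  induction i, hci using Nat.le_induction with
  | base =>
    have hconj : band n (c + 2) j =
        bσ n (c + 1) * bσ n c * band n c j * (bσ n (c + 1) * bσ n c)⁻¹ := by
      rw [band_succ (by omega), band_succ hjc]; group
    rw [hconj]
    exact commute_conj_of_braid (bσ_braid (by omega) (by omega))
      (bσ_commute_band_of_far hj hjc (by omega) (.inr le_rfl))
  | succ i hci ih =>
    rw [band_succ (by omega)]
    have hσ : Commute (bσ n c) (bσ n i) := bσ_commute (by omega) hci
    exact (hσ.mul_right (ih (by omega))).mul_right hσ.inv_right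

theorem noncrossing_cases {i j k l : ℤ}
    (hpos : 0 < (k - i) * (k - j) * (l - i) * (l - j)) (hji : j < i) (hlk : l < k) :
    (k < j ∨ i < l) ∨ (j < l ∧ k < i) ∨ (l < j ∧ i < k) := by
  rw [mul_assoc, Int.mul_pos_iff, Int.mul_pos_iff, Int.mul_pos_iff, Int.mul_neg_iff,
    Int.mul_neg_iff] at hpos
  omega

/-- The band generators satisfy `a_{kl} a_{ij} = a_{ij} a_{kl}`
whenever `(k-i)(k-j)(l-i)(l-j) > 0`, for `1 ≤ j < i ≤ n` and `1 ≤ l < k ≤ n`. -/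
theorem band_commute (n i j k l : ℕ) (hj : 1 ≤ j) (hji : j < i) (hin : i ≤ n)
    (hl : 1 ≤ l) (hlk : l < k) (hkn : k ≤ n)
    (hpos : 0 < ((k : ℤ) - i) * ((k : ℤ) - j) * ((l : ℤ) - i) * ((l : ℤ) - j)) :
    band n k l * band n i j = band n i j * band n k l := by
  rcases noncrossing_cases hpos (by omega) (by omega) with hfar | ⟨hjl, hki⟩ | ⟨hlj, hik⟩
  · exact (commute_band_of_commute_bσ hlk fun c hlc hck =>
      (bσ_commute_band_of_far hj hji (by omega) (by omega)).symm).symm.eq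
  · exact (commute_band_of_commute_bσ hlk fun c hlc hck =>
      (bσ_commute_band_of_lt hj (by omega) (by omega) hin).symm).symm.eq
  · exact (commute_band_of_commute_bσ hji fun c hjc hci =>
      (bσ_commute_band_of_lt hl (by omega) (by omega) hkn).symm).eq
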